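/- arXiv:math/0105108 — 3 statements merged into one kernel-verified Lean document; each statement's English description precedes it below -/
import Mathlib

section
/- The map sending a nonzero homogeneous polynomial f : ℂ³ → ℂ of degree d (with nonempty projective zero set) to the projectivization of its zero set in ℂP² is continuous as a map into the space of compact subsets of ℂP² with the Hausdorff metric. -/
open MvPolynomial
open Metric

/-- Coefficientwise topology on polynomials. -/
noncomputable instance : TopologicalSpace (MvPolynomial (Fin 3) ℂ) :=
  TopologicalSpace.induced
    (fun p => (fun m => MvPolynomial.coeff m p : (Fin 3 →₀ ℕ) → ℂ)) inferInstance

/-- The projectivization of the zero set of `f` in `ℂP²`. -/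
def projZeroSet (f : MvPolynomial (Fin 3) ℂ) : Set (Projectivization ℂ (Fin 3 → ℂ)) :=
  {P | ∃ (v : Fin 3 → ℂ) (hv : v ≠ 0),
    Projectivization.mk ℂ v hv = P ∧ MvPolynomial.eval v f = 0}

noncomputable section
namespace Stmt6Aux

/-- monomials of degree `d` in 3 variables -/
def Mset (d : ℕ) : Finset (Fin 3 →₀ ℕ) := Finset.finsuppAntidiag Finset.univ d

lemma sum_eq_of_mem_Mset {d : ℕ} {m : Fin 3 →₀ ℕ} (hm : m ∈ Mset d) :
    ∑ i, m i = d := (Finset.mem_finsuppAntidiag.mp hm).1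

lemma support_subset_Mset {d : ℕ} {g : MvPolynomial (Fin 3) ℂ} (hg : g.IsHomogeneous d) :
    g.support ⊆ Mset d := by
  intro m hm
  rw [Mset, Finset.mem_finsuppAntidiag]
  refine ⟨?_, Finset.subset_univ _⟩
  have h1 : m.degree = d := by
    by_contra h
    exact (MvPolynomial.mem_support_iff.mp hm) (hg.coeff_eq_zero h)
  rw [← h1, Finsupp.degree]
  exact (Finset.sum_subset (Finset.subset_univ _) (by
    intro i _ hi
    simpa using (Finsupp.notMem_support_iff.mp hi))).symm

lemma eval_eq_sum_Mset {d : ℕ} {g : MvPolynomial (Fin 3) ℂ} (hg : g.IsHomogeneous d)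
    (x : Fin 3 → ℂ) :
    eval x g = ∑ m ∈ Mset d, coeff m g * ∏ i, x i ^ m i := by
  rw [eval_eq']
  exact Finset.sum_subset (support_subset_Mset hg) (by
    intro m _ hm
    rw [MvPolynomial.notMem_support_iff.mp hm, zero_mul])

lemma eval_smul_homog {d : ℕ} {g : MvPolynomial (Fin 3) ℂ} (hg : g.IsHomogeneous d)
    (c : ℂ) (x : Fin 3 → ℂ) :
    eval (c • x) g = c ^ d * eval x g := by
  rw [eval_eq_sum_Mset hg, eval_eq_sum_Mset hg, Finset.mul_sum]
  refine Finset.sum_congr rfl fun m hm => ?_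
  have : ∏ i, (c • x) i ^ m i = c ^ d * ∏ i, x i ^ m i := by
    simp only [Pi.smul_apply, smul_eq_mul, mul_pow]
    rw [Finset.prod_mul_distrib, Finset.prod_pow_eq_pow_sum, sum_eq_of_mem_Mset hm]
  rw [this]; ring

lemma continuous_coeff (m : Fin 3 →₀ ℕ) :
    Continuous (fun p : MvPolynomial (Fin 3) ℂ => coeff m p) :=
  (continuous_apply m).comp continuous_induced_dom

lemma continuous_eval_pt (g : MvPolynomial (Fin 3) ℂ) :
    Continuous (fun x : Fin 3 → ℂ => eval x g) := by
  have : (fun x : Fin 3 → ℂ => eval x g)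
      = fun x => ∑ m ∈ g.support, coeff m g * ∏ i, x i ^ m i := by
    funext x; rw [eval_eq']
  rw [this]
  exact continuous_finset_sum _ fun m _ => continuous_const.mul <|
    continuous_finset_prod _ fun i _ => (continuous_apply i).pow _

lemma norm_eval_sub_le {d : ℕ} {g f : MvPolynomial (Fin 3) ℂ}
    (hg : g.IsHomogeneous d) (hf : f.IsHomogeneous d) {x : Fin 3 → ℂ}
    (hx : ∀ i, ‖x i‖ ≤ 1) :
    ‖eval x g - eval x f‖ ≤ ∑ m ∈ Mset d, ‖coeff m g - coeff m f‖ := by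
  rw [eval_eq_sum_Mset hg, eval_eq_sum_Mset hf, ← Finset.sum_sub_distrib]
  refine (norm_sum_le _ _).trans (Finset.sum_le_sum fun m _ => ?_)
  rw [← sub_mul, norm_mul]
  have h1 : ‖∏ i, x i ^ m i‖ ≤ 1 := by
    rw [norm_prod]
    refine Finset.prod_le_one (fun i _ => norm_nonneg _) fun i _ => ?_
    rw [norm_pow]
    exact pow_le_one₀ (norm_nonneg _) (hx i)
  calc ‖coeff m g - coeff m f‖ * ‖∏ i, x i ^ m i‖
      ≤ ‖coeff m g - coeff m f‖ * 1 :=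
        mul_le_mul_of_nonneg_left h1 (norm_nonneg _)
    _ = _ := mul_one _

open Polynomial

lemma coeff_prod_aux {ι : Type*} (s : Finset ι) (f : ι → Polynomial ℂ) (n : ι → ℕ)
    (h : ∀ i ∈ s, (f i).natDegree ≤ n i) :
    (∏ i ∈ s, f i).coeff (∑ i ∈ s, n i) = ∏ i ∈ s, (f i).coeff (n i) := by
  classical
  induction s using Finset.cons_induction with
  | empty => simp
  | cons a s ha ih =>
    rw [Finset.prod_cons, Finset.sum_cons, Finset.prod_cons,
      Polynomial.coeff_mul_add_eq_of_natDegree_le (h a (Finset.mem_cons_self a s))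
        ((Polynomial.natDegree_prod_le s f).trans (Finset.sum_le_sum fun i hi =>
          h i (Finset.mem_cons_of_mem hi))),
      ih fun i hi => h i (Finset.mem_cons_of_mem hi)]

/-- the one-variable restriction of `g` to the line `t ↦ v + t w`. -/
def linePoly (g : MvPolynomial (Fin 3) ℂ) (v w : Fin 3 → ℂ) : Polynomial ℂ :=
  MvPolynomial.eval₂ Polynomial.C
    (fun i => Polynomial.C (v i) + Polynomial.X * Polynomial.C (w i)) g

lemma linePoly_eval (g : MvPolynomial (Fin 3) ℂ) (v w : Fin 3 → ℂ) (t : ℂ) :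
    (linePoly g v w).eval t = MvPolynomial.eval (fun i => v i + t * w i) g := by
  rw [linePoly, MvPolynomial.polynomial_eval_eval₂]
  have h1 : ((Polynomial.evalRingHom t).comp (Polynomial.C : ℂ →+* Polynomial ℂ))
      = RingHom.id ℂ := by ext a; simp
  rw [h1]
  simp only [Polynomial.eval_add, Polynomial.eval_C, Polynomial.eval_mul, Polynomial.eval_X]
  rfl

lemma natDegree_sigma (v w : Fin 3 → ℂ) (i : Fin 3) :
    (Polynomial.C (v i) + Polynomial.X * Polynomial.C (w i)).natDegree ≤ 1 := by
  refine (Polynomial.natDegree_add_le _ _).trans ?_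
  refine max_le (by simp) ((Polynomial.natDegree_mul_le).trans ?_)
  simp

lemma coeff_one_sigma (v w : Fin 3 → ℂ) (i : Fin 3) :
    (Polynomial.C (v i) + Polynomial.X * Polynomial.C (w i)).coeff 1 = w i := by
  rw [Polynomial.coeff_add, Polynomial.coeff_C]
  simp [Polynomial.coeff_X_mul]


end Stmt6Aux

noncomputable section
namespace Stmt6Aux
open Polynomial

lemma natDegree_sigma_pow (v w : Fin 3 → ℂ) (i : Fin 3) (k : ℕ) :
    ((Polynomial.C (v i) + Polynomial.X * Polynomial.C (w i)) ^ k).natDegree ≤ k := by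
  refine Polynomial.natDegree_pow_le.trans ?_
  calc k * (Polynomial.C (v i) + Polynomial.X * Polynomial.C (w i)).natDegree
      ≤ k * 1 := Nat.mul_le_mul_left k (natDegree_sigma v w i)
    _ = k := mul_one k

lemma monomial_line_eq (v w : Fin 3 → ℂ) (m : Fin 3 →₀ ℕ) (c : ℂ) :
    MvPolynomial.eval₂ Polynomial.C
        (fun i => Polynomial.C (v i) + Polynomial.X * Polynomial.C (w i))
        (MvPolynomial.monomial m c)
      = Polynomial.C c * ∏ i, (Polynomial.C (v i) + Polynomial.X * Polynomial.C (w i)) ^ m i := by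
  rw [MvPolynomial.eval₂_monomial]
  congr 1
  exact Finsupp.prod_fintype _ _ (fun i => pow_zero _)

lemma linePoly_natDegree_le {d : ℕ} {g : MvPolynomial (Fin 3) ℂ} (hg : g.IsHomogeneous d)
    (v w : Fin 3 → ℂ) : (linePoly g v w).natDegree ≤ d := by
  classical
  rw [linePoly]
  conv_lhs => rw [g.as_sum]
  rw [MvPolynomial.eval₂_sum]
  refine Polynomial.natDegree_sum_le_of_forall_le _ _ fun m hm => ?_
  rw [monomial_line_eq]
  refine (Polynomial.natDegree_mul_le).trans ?_
  rw [Polynomial.natDegree_C, zero_add]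
  refine (Polynomial.natDegree_prod_le _ _).trans ?_
  have h1 : ∑ i, ((Polynomial.C (v i) + Polynomial.X * Polynomial.C (w i)) ^ m i).natDegree
      ≤ ∑ i, m i := Finset.sum_le_sum fun i _ => natDegree_sigma_pow v w i (m i)
  exact h1.trans (le_of_eq (sum_eq_of_mem_Mset (support_subset_Mset hg hm)))

lemma linePoly_coeff_d {d : ℕ} {g : MvPolynomial (Fin 3) ℂ} (hg : g.IsHomogeneous d)
    (v w : Fin 3 → ℂ) : (linePoly g v w).coeff d = MvPolynomial.eval w g := by
  classical
  rw [linePoly]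
  conv_lhs => rw [g.as_sum]
  rw [MvPolynomial.eval₂_sum, Polynomial.finset_sum_coeff]
  rw [eval_eq_sum_Mset hg]
  refine Eq.trans ?_ (Finset.sum_subset (support_subset_Mset hg) (by
    intro m _ hm
    rw [MvPolynomial.notMem_support_iff.mp hm, zero_mul]))
  refine Finset.sum_congr rfl fun m hm => ?_
  rw [monomial_line_eq, Polynomial.coeff_C_mul]
  congr 1
  have hd : d = ∑ i, m i := (sum_eq_of_mem_Mset (support_subset_Mset hg hm)).symm
  rw [hd, coeff_prod_aux _ _ (fun i => m i) (fun i _ => natDegree_sigma_pow v w i (m i))]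
  refine Finset.prod_congr rfl fun i _ => ?_
  have h2 := Polynomial.coeff_pow_of_natDegree_le
    (p := Polynomial.C (v i) + Polynomial.X * Polynomial.C (w i)) (n := 1) (m := m i)
    (natDegree_sigma v w i)
  rw [mul_one] at h2
  rw [h2, coeff_one_sigma]

end Stmt6Aux

noncomputable section
namespace Stmt6Aux
open Polynomial

lemma pow_le_multiset_prod {τ : ℝ} (hτ : 0 ≤ τ) (s : Multiset ℝ)
    (h : ∀ x ∈ s, τ ≤ x) : τ ^ (Multiset.card s) ≤ s.prod := by
  induction s using Multiset.induction with
  | empty => simp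
  | cons a s ih =>
    rw [Multiset.prod_cons, Multiset.card_cons, pow_succ, mul_comm]
    have ha : τ ≤ a := h a (Multiset.mem_cons_self a s)
    have hs : τ ^ (Multiset.card s) ≤ s.prod := ih fun x hx => h x (Multiset.mem_cons_of_mem hx)
    have h0 : (0:ℝ) ≤ τ ^ (Multiset.card s) := pow_nonneg hτ _
    exact mul_le_mul ha hs h0 (le_trans hτ ha)

lemma exists_small_root {p : Polynomial ℂ} {τ : ℝ} (hτ : 0 < τ)
    (hdeg : 1 ≤ p.natDegree)
    (hb : ‖p.eval 0‖ < τ ^ p.natDegree * ‖p.leadingCoeff‖) :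
    ∃ r : ℂ, p.IsRoot r ∧ ‖r‖ < τ := by
  have hp0 : p ≠ 0 := fun h => by simp [h] at hdeg
  have hlead : p.leadingCoeff ≠ 0 := Polynomial.leadingCoeff_ne_zero.mpr hp0
  have hsplit : p.Splits := IsAlgClosed.splits p
  have hcard : Multiset.card p.roots = p.natDegree :=
    (Polynomial.splits_iff_card_roots).mp hsplit
  by_contra hcon
  push_neg at hcon
  have hall : ∀ x ∈ p.roots.map (fun a : ℂ => ‖a‖), τ ≤ x := by
    intro x hx
    obtain ⟨a, ha, rfl⟩ := Multiset.mem_map.mp hx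
    exact hcon a ((Polynomial.mem_roots hp0).mp ha)
  have hprod : τ ^ p.natDegree ≤ (p.roots.map (fun a : ℂ => ‖a‖)).prod := by
    have := pow_le_multiset_prod hτ.le _ hall
    rwa [Multiset.card_map, hcard] at this
  have heval : ‖p.eval 0‖ = ‖p.leadingCoeff‖ * (p.roots.map (fun a : ℂ => ‖a‖)).prod := by
    conv_lhs => rw [← Polynomial.C_leadingCoeff_mul_prod_multiset_X_sub_C hcard]
    rw [Polynomial.eval_mul, Polynomial.eval_C, norm_mul]
    congr 1
    rw [Polynomial.eval_multiset_prod, Multiset.map_map]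
    have h3 : Multiset.map (Polynomial.eval 0 ∘ fun a : ℂ => Polynomial.X - Polynomial.C a) p.roots
        = Multiset.map (fun a : ℂ => -a) p.roots :=
      Multiset.map_congr rfl (fun a _ => by simp)
    rw [h3, show ‖(Multiset.map (fun a : ℂ => -a) p.roots).prod‖
        = ((Multiset.map (fun a : ℂ => -a) p.roots).map (fun z : ℂ => ‖z‖)).prod from
      map_multiset_prod (normHom : ℂ →*₀ ℝ) _, Multiset.map_map]
    exact congrArg Multiset.prod (Multiset.map_congr rfl (fun a _ => by simp))
  have : τ ^ p.natDegree * ‖p.leadingCoeff‖ ≤ ‖p.eval 0‖ := by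
    rw [heval, mul_comm]
    exact mul_le_mul_of_nonneg_left hprod (norm_nonneg _)
  linarith

end Stmt6Aux

noncomputable section
namespace Stmt6Aux

abbrev Sub (d : ℕ) := {f : MvPolynomial (Fin 3) ℂ //
  f.IsHomogeneous d ∧ f ≠ 0 ∧ (projZeroSet f).Nonempty}

lemma exists_unit_rep {d : ℕ} {g : MvPolynomial (Fin 3) ℂ} (hg : g.IsHomogeneous d)
    {P} (hP : P ∈ projZeroSet g) :
    ∃ x : Fin 3 → ℂ, ‖x‖ = 1 ∧ ∃ h : x ≠ 0, Projectivization.mk ℂ x h = P ∧ eval x g = 0 := by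
  obtain ⟨u, hu, hmk, he⟩ := hP
  have hnu : ‖u‖ ≠ 0 := norm_ne_zero_iff.mpr hu
  set c : ℂ := ((‖u‖⁻¹ : ℝ) : ℂ) with hc
  have hcnorm : ‖c‖ = ‖u‖⁻¹ := by
    rw [hc, Complex.norm_real, Real.norm_eq_abs, abs_of_nonneg (inv_nonneg.mpr (norm_nonneg u))]
  set x := c • u with hxdef
  have hx1 : ‖x‖ = 1 := by
    rw [hxdef, norm_smul, hcnorm, inv_mul_cancel₀ hnu]
  have hx0 : x ≠ 0 := by
    intro h; rw [h, norm_zero] at hx1; exact zero_ne_one hx1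
  refine ⟨x, hx1, hx0, ?_, ?_⟩
  · rw [← hmk, Projectivization.mk_eq_mk_iff]
    have hc0 : c ≠ 0 := by
      rw [hc]; exact_mod_cast inv_ne_zero hnu
    exact ⟨Units.mk0 c hc0, rfl⟩
  · rw [hxdef, eval_smul_homog hg, he, mul_zero]

variable [MetricSpace (Projectivization ℂ (Fin 3 → ℂ))]

lemma claimA {d : ℕ}
    (hquot : Topology.IsQuotientMap
      (fun v : {v : Fin 3 → ℂ // v ≠ 0} => Projectivization.mk ℂ v.1 v.2))
    (f₀ : Sub d) {ε : ℝ} (hε : 0 < ε) :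
    ∀ᶠ g : Sub d in nhds f₀, ∀ P ∈ projZeroSet g.1, ∃ Q ∈ projZeroSet f₀.1, dist P Q ≤ ε := by
  classical
  set Zf := projZeroSet f₀.1 with hZf
  have hne : Zf.Nonempty := f₀.2.2.2
  set K : Set (Projectivization ℂ (Fin 3 → ℂ)) := {P | ε ≤ infDist P Zf} with hK
  have hKclosed : IsClosed K := isClosed_le continuous_const (continuous_infDist_pt Zf)
  set S := Metric.sphere (0 : Fin 3 → ℂ) 1 with hS
  have hSne0 : ∀ x : S, (x : Fin 3 → ℂ) ≠ 0 := by
    intro x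
    have h1 : ‖(x : Fin 3 → ℂ)‖ = 1 := mem_sphere_zero_iff_norm.mp x.2
    intro h; rw [h, norm_zero] at h1; exact zero_ne_one h1
  have hcont_mk : Continuous fun x : S => Projectivization.mk ℂ (x : Fin 3 → ℂ) (hSne0 x) := by
    exact hquot.continuous.comp (continuous_subtype_val.subtype_mk hSne0)
  have hcs : CompactSpace S := isCompact_iff_compactSpace.mp (isCompact_sphere (0 : Fin 3 → ℂ) (1:ℝ))
  set A : Set S := (fun x : S => Projectivization.mk ℂ (x : Fin 3 → ℂ) (hSne0 x)) ⁻¹' K with hA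
  have hAcomp : IsCompact A := (hKclosed.preimage hcont_mk).isCompact
  have key : ∀ (g : Sub d), (∀ x : S, (⟨x.1, x.2⟩ : S) ∈ A →
        ¬ eval (x : Fin 3 → ℂ) g.1 = 0) →
      ∀ P ∈ projZeroSet g.1, ∃ Q ∈ projZeroSet f₀.1, dist P Q ≤ ε := by
    intro g hgood P hP
    obtain ⟨x, hx1, hx0, hmk, hev0⟩ := exists_unit_rep g.2.1 hP
    have hxS : x ∈ S := mem_sphere_zero_iff_norm.mpr hx1
    have hnotA : (⟨x, hxS⟩ : S) ∉ A := fun hmem => hgood ⟨x, hxS⟩ hmem hev0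
    have hlt : infDist P Zf < ε := by
      by_contra hge
      push_neg at hge
      apply hnotA
      simp only [hA, Set.mem_preimage, hK, Set.mem_setOf_eq]
      have : Projectivization.mk ℂ x (hSne0 ⟨x, hxS⟩) = P := hmk
      rw [this]
      exact hge
    obtain ⟨Q, hQ, hdQ⟩ := (infDist_lt_iff hne).mp hlt
    exact ⟨Q, hQ, hdQ.le⟩
  rcases A.eq_empty_or_nonempty with hAe | hAne
  · refine Filter.Eventually.of_forall fun g => key g ?_
    intro x hx
    rw [hAe] at hx
    exact absurd hx (Set.notMem_empty _)
  · obtain ⟨x₀, hx₀A, hmin⟩ := hAcomp.exists_isMinOn hAne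
      (((continuous_eval_pt f₀.1).norm.comp continuous_subtype_val).continuousOn)
    have hcpos : 0 < ‖eval (x₀ : Fin 3 → ℂ) f₀.1‖ := by
      rcases eq_or_ne (eval (x₀ : Fin 3 → ℂ) f₀.1) 0 with h0 | h0
      · exfalso
        have hPmem : Projectivization.mk ℂ (x₀ : Fin 3 → ℂ) (hSne0 x₀) ∈ Zf :=
          ⟨x₀.1, hSne0 x₀, rfl, h0⟩
        have h1 : infDist (Projectivization.mk ℂ (x₀ : Fin 3 → ℂ) (hSne0 x₀)) Zf = 0 :=
          infDist_zero_of_mem hPmem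
        have h2 : ε ≤ 0 := le_of_le_of_eq hx₀A h1
        linarith
      · exact norm_pos_iff.mpr h0
    have hScont : Continuous fun g : Sub d =>
        ∑ m ∈ Mset d, ‖coeff m g.1 - coeff m f₀.1‖ :=
      continuous_finset_sum _ fun m _ =>
        (((continuous_coeff m).comp continuous_subtype_val).sub continuous_const).norm
    have hev : ∀ᶠ g : Sub d in nhds f₀,
        ∑ m ∈ Mset d, ‖coeff m g.1 - coeff m f₀.1‖ < ‖eval (x₀ : Fin 3 → ℂ) f₀.1‖ := by
      have h3 := hScont.continuousAt (x := f₀)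
      rw [ContinuousAt] at h3
      simp only [sub_self, norm_zero, Finset.sum_const_zero] at h3
      exact h3.eventually_lt_const hcpos
    refine hev.mono fun g hg => key g ?_
    intro x hxA hev0
    have hx1 : ‖(x : Fin 3 → ℂ)‖ = 1 := mem_sphere_zero_iff_norm.mp x.2
    have hxi : ∀ i, ‖(x : Fin 3 → ℂ) i‖ ≤ 1 := fun i => hx1 ▸ norm_le_pi_norm (x : Fin 3 → ℂ) i
    have hb := norm_eval_sub_le g.2.1 f₀.2.1 hxi
    rw [hev0, zero_sub, norm_neg] at hb
    have hlt2 : ‖eval (x : Fin 3 → ℂ) f₀.1‖ < ‖eval (x₀ : Fin 3 → ℂ) f₀.1‖ := lt_of_le_of_lt hb hg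
    have h4 := hmin hxA
    simp only [Function.comp] at h4
    exact absurd hlt2 (not_lt.mpr h4)

end Stmt6Aux

noncomputable section
namespace Stmt6Aux
open Polynomial

lemma cont_eval_sub (d : ℕ) (x : Fin 3 → ℂ) :
    Continuous fun g : Sub d => MvPolynomial.eval x g.1 := by
  have h1 : (fun g : Sub d => MvPolynomial.eval x g.1)
      = fun g : Sub d => ∑ m ∈ Mset d, MvPolynomial.coeff m g.1 * ∏ i, x i ^ m i := by
    funext g; exact eval_eq_sum_Mset g.2.1 x
  rw [h1]
  exact continuous_finset_sum _ fun m _ =>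
    ((continuous_coeff m).comp continuous_subtype_val).mul continuous_const

variable [MetricSpace (Projectivization ℂ (Fin 3 → ℂ))]

lemma pointB {d : ℕ}
    (hquot : Topology.IsQuotientMap
      (fun v : {v : Fin 3 → ℂ // v ≠ 0} => Projectivization.mk ℂ v.1 v.2))
    (f₀ : Sub d) {Q} (hQ : Q ∈ projZeroSet f₀.1) {δ : ℝ} (hδ : 0 < δ) :
    ∀ᶠ g : Sub d in nhds f₀, ∃ P ∈ projZeroSet g.1, dist Q P < δ := by
  classical
  obtain ⟨v, hv, hmk, hev⟩ := hQ
  have hd1 : 1 ≤ d := by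
    by_contra h
    push_neg at h
    have hd0 : d = 0 := by omega
    apply f₀.2.2.1
    apply MvPolynomial.funext (q := 0)
    intro x
    have h1 := eval_smul_homog f₀.2.1 0 x
    have h2 := eval_smul_homog f₀.2.1 0 v
    have h0d : (0:ℂ) ^ d = 1 := by rw [hd0, pow_zero]
    rw [h0d, one_mul, zero_smul] at h1 h2
    simp only [map_zero]
    rw [← h1, h2, hev]
  have hexw : ∃ w, MvPolynomial.eval w f₀.1 ≠ 0 := by
    by_contra h
    push_neg at h
    exact f₀.2.2.1 (MvPolynomial.funext fun x => by rw [h x, map_zero])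
  obtain ⟨w, hw⟩ := hexw
  set L := ‖MvPolynomial.eval w f₀.1‖ with hL
  have hLpos : 0 < L := norm_pos_iff.mpr hw
  have hcontv : ContinuousAt
      (fun u : {v : Fin 3 → ℂ // v ≠ 0} => Projectivization.mk ℂ u.1 u.2) ⟨v, hv⟩ :=
    hquot.continuous.continuousAt
  rw [Metric.continuousAt_iff] at hcontv
  obtain ⟨η, hη, hball⟩ := hcontv δ hδ
  set η₀ := min η ‖v‖ with hη₀def
  have hη₀ : 0 < η₀ := lt_min hη (norm_pos_iff.mpr hv)
  set τ := η₀ / (‖w‖ + 1) with hτdef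
  have hwpos : (0:ℝ) < ‖w‖ + 1 := by positivity
  have hτ : 0 < τ := div_pos hη₀ hwpos
  have hcv := cont_eval_sub d v
  have hcw := cont_eval_sub d w
  have E1 : ∀ᶠ g : Sub d in nhds f₀, ‖MvPolynomial.eval v g.1‖ < τ ^ d * (L / 2) := by
    have h1 : Filter.Tendsto (fun g : Sub d => ‖MvPolynomial.eval v g.1‖)
        (nhds f₀) (nhds 0) := by
      have h2 := (hcv.norm.continuousAt (x := f₀))
      rw [ContinuousAt] at h2
      simp only [hev, norm_zero] at h2
      exact h2
    exact h1.eventually_lt_const (by positivity)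
  have E2 : ∀ᶠ g : Sub d in nhds f₀, L / 2 < ‖MvPolynomial.eval w g.1‖ := by
    have h1 : Filter.Tendsto (fun g : Sub d => ‖MvPolynomial.eval w g.1‖)
        (nhds f₀) (nhds L) := by
      have h2 := (hcw.norm.continuousAt (x := f₀)); rwa [ContinuousAt] at h2
    exact h1.eventually_const_lt (by linarith)
  filter_upwards [E1, E2] with g h1 h2
  set φ := linePoly g.1 v w with hφ
  have hdeg_le : φ.natDegree ≤ d := linePoly_natDegree_le g.2.1 v w
  have hcd : φ.coeff d = MvPolynomial.eval w g.1 := linePoly_coeff_d g.2.1 v w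
  have hwg : MvPolynomial.eval w g.1 ≠ 0 := by
    intro h; rw [h, norm_zero] at h2; linarith
  have hdeg : φ.natDegree = d :=
    le_antisymm hdeg_le (Polynomial.le_natDegree_of_ne_zero (hcd ▸ hwg))
  have hlead : φ.leadingCoeff = MvPolynomial.eval w g.1 := by
    rw [Polynomial.leadingCoeff, hdeg, hcd]
  have hev0 : φ.eval 0 = MvPolynomial.eval v g.1 := by
    rw [hφ, linePoly_eval]
    have hvv : (fun i => v i + 0 * w i) = v := by funext i; ring
    rw [hvv]
  have hroot : ∃ r : ℂ, φ.IsRoot r ∧ ‖r‖ < τ := by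
    apply exists_small_root hτ (le_of_le_of_eq hd1 hdeg.symm)
    rw [hev0, hdeg, hlead]
    calc ‖MvPolynomial.eval v g.1‖ < τ ^ d * (L/2) := h1
      _ ≤ τ ^ d * ‖MvPolynomial.eval w g.1‖ :=
          mul_le_mul_of_nonneg_left (le_of_lt h2) (by positivity)
  obtain ⟨r, hr, hrτ⟩ := hroot
  set u : Fin 3 → ℂ := fun i => v i + r * w i with hu
  have hevu : MvPolynomial.eval u g.1 = 0 := by
    rw [hu, ← linePoly_eval, ← hφ]; exact hr
  have hdistuv : dist u v < η₀ := by
    rw [dist_eq_norm]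
    have huv : u - v = r • w := by
      funext i
      simp only [hu, Pi.sub_apply, Pi.smul_apply, smul_eq_mul]
      ring
    rw [huv, norm_smul]
    calc ‖r‖ * ‖w‖ ≤ ‖r‖ * (‖w‖ + 1) := by nlinarith [norm_nonneg r, norm_nonneg w]
      _ < τ * (‖w‖ + 1) := by nlinarith
      _ = η₀ := by rw [hτdef]; field_simp
  have hu0 : u ≠ 0 := by
    intro h
    rw [h] at hdistuv
    have hz : dist (0 : Fin 3 → ℂ) v = ‖v‖ := by rw [dist_eq_norm, zero_sub, norm_neg]
    rw [hz] at hdistuv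
    exact absurd hdistuv (not_lt.mpr (min_le_right η ‖v‖))
  have hdsub : dist (⟨u, hu0⟩ : {v : Fin 3 → ℂ // v ≠ 0}) ⟨v, hv⟩ < η := by
    rw [Subtype.dist_eq]
    exact lt_of_lt_of_le hdistuv (min_le_left _ _)
  have hPd := hball hdsub
  refine ⟨Projectivization.mk ℂ u hu0, ⟨u, hu0, rfl, hevu⟩, ?_⟩
  rw [dist_comm]
  rw [hmk] at hPd
  exact hPd

end Stmt6Aux

noncomputable section
namespace Stmt6Aux
variable [MetricSpace (Projectivization ℂ (Fin 3 → ℂ))]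

lemma claimB {d : ℕ}
    (hquot : Topology.IsQuotientMap
      (fun v : {v : Fin 3 → ℂ // v ≠ 0} => Projectivization.mk ℂ v.1 v.2))
    (f₀ : Sub d) (hc : IsCompact (projZeroSet f₀.1)) {ε : ℝ} (hε : 0 < ε) :
    ∀ᶠ g : Sub d in nhds f₀, ∀ Q ∈ projZeroSet f₀.1, ∃ P ∈ projZeroSet g.1, dist Q P ≤ ε := by
  classical
  have hcover : projZeroSet f₀.1 ⊆
      ⋃ q : projZeroSet f₀.1, Metric.ball (q : Projectivization ℂ (Fin 3 → ℂ)) (ε/2) := by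
    intro Q hQ
    exact Set.mem_iUnion.mpr ⟨⟨Q, hQ⟩, Metric.mem_ball_self (by linarith)⟩
  obtain ⟨t, ht⟩ := hc.elim_finite_subcover
    (fun q : projZeroSet f₀.1 => Metric.ball (q : Projectivization ℂ (Fin 3 → ℂ)) (ε/2))
    (fun q => Metric.isOpen_ball) hcover
  have hev : ∀ᶠ g : Sub d in nhds f₀, ∀ q ∈ t,
      ∃ P ∈ projZeroSet g.1, dist (q : Projectivization ℂ (Fin 3 → ℂ)) P < ε/2 := by
    rw [Filter.eventually_all_finset]
    intro q _
    exact pointB hquot f₀ q.2 (by linarith)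
  refine hev.mono fun g hg Q hQ => ?_
  obtain ⟨q, hqt, hQq⟩ :
      ∃ q ∈ t, Q ∈ Metric.ball (q : Projectivization ℂ (Fin 3 → ℂ)) (ε/2) := by
    have h5 := ht hQ
    simpa using h5
  obtain ⟨P, hP, hdP⟩ := hg q hqt
  refine ⟨P, hP, ?_⟩
  have hdq : dist Q (q : Projectivization ℂ (Fin 3 → ℂ)) < ε/2 := Metric.mem_ball.mp hQq
  calc dist Q P ≤ dist Q (q : Projectivization ℂ (Fin 3 → ℂ)) + dist (q : Projectivization ℂ (Fin 3 → ℂ)) P := dist_triangle _ _ _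
    _ ≤ ε := by linarith

end Stmt6Aux


theorem stmt_6 (d : ℕ) [MetricSpace (Projectivization ℂ (Fin 3 → ℂ))]
    (hquot : Topology.IsQuotientMap
      (fun v : {v : Fin 3 → ℂ // v ≠ 0} => Projectivization.mk ℂ v.1 v.2))
    (F : {f : MvPolynomial (Fin 3) ℂ //
        f.IsHomogeneous d ∧ f ≠ 0 ∧ (projZeroSet f).Nonempty} →
      TopologicalSpace.NonemptyCompacts (Projectivization ℂ (Fin 3 → ℂ)))
    (hF : ∀ f, (F f : Set (Projectivization ℂ (Fin 3 → ℂ))) = projZeroSet f.1) :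
    Continuous F := by
  classical
  rw [continuous_iff_continuousAt]
  intro f₀
  rw [ContinuousAt, Metric.tendsto_nhds]
  intro ε hε
  have hε2 : (0:ℝ) < ε/2 := by linarith
  have hA := Stmt6Aux.claimA hquot f₀ hε2
  have hcomp : IsCompact (projZeroSet f₀.1) := by
    rw [← hF f₀]; exact (F f₀).isCompact
  have hB := Stmt6Aux.claimB hquot f₀ hcomp hε2
  filter_upwards [hA, hB] with g h1 h2
  have hdist : dist (F g) (F f₀) ≤ ε/2 := by
    rw [Metric.NonemptyCompacts.dist_eq]
    refine Metric.hausdorffDist_le_of_mem_dist (by linarith) ?_ ?_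
    · rw [hF g, hF f₀]; exact h1
    · rw [hF g, hF f₀]; exact h2
  linarith
end
end
end
end
end
end
end

section
/- The set of projective zero sets of nonzero homogeneous polynomials of a fixed degree d on ℂ³ is a closed subset of the space of nonempty compact subsets of ℂP² with the Hausdorff metric. -/
open MvPolynomial Metric Filter Topology

namespace Stmt7Aux


variable (d : ℕ)

/-- Index type for degree-`d` monomials in 3 variables. -/
abbrev T := {m : Fin 3 → Fin (d + 1) // ∑ i, (m i : ℕ) = d}

noncomputable def expOf (m : Fin 3 → Fin (d + 1)) : Fin 3 →₀ ℕ :=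
  Finsupp.equivFunOnFinite.symm fun i => (m i : ℕ)

@[simp] lemma expOf_apply (m : Fin 3 → Fin (d + 1)) (i : Fin 3) :
    expOf d m i = (m i : ℕ) := rfl

lemma expOf_injective : Function.Injective (expOf d) := by
  intro a b h
  funext i
  have := congrArg (fun f => f i) h
  simpa [expOf, Fin.val_injective.eq_iff] using this

lemma degree_expOf (m : Fin 3 → Fin (d + 1)) :
    (expOf d m).degree = ∑ i, (m i : ℕ) := by
  rw [Finsupp.degree]
  refine Finset.sum_subset (Finset.subset_univ _) ?_
  intro i _ hi
  simpa using Finsupp.notMem_support_iff.mp hi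

noncomputable def P (c : T d → ℂ) : MvPolynomial (Fin 3) ℂ :=
  ∑ m : T d, monomial (expOf d m.1) (c m)

noncomputable def E (c : T d → ℂ) (v : Fin 3 → ℂ) : ℂ :=
  ∑ m : T d, c m * ∏ i, v i ^ (m.1 i : ℕ)

lemma eval_P (c : T d → ℂ) (v : Fin 3 → ℂ) : eval v (P d c) = E d c v := by
  rw [P, E, map_sum]
  refine Finset.sum_congr rfl fun m _ => ?_
  rw [eval_monomial, Finsupp.prod_fintype]
  · rfl
  · intro i; exact pow_zero _

lemma isHomogeneous_P (c : T d → ℂ) : (P d c).IsHomogeneous d := by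
  rw [← mem_homogeneousSubmodule]
  refine Submodule.sum_mem _ fun m _ => ?_
  rw [mem_homogeneousSubmodule]
  exact isHomogeneous_monomial _ (by rw [degree_expOf]; exact m.2)

lemma coeff_P (c : T d → ℂ) (m : T d) : coeff (expOf d m.1) (P d c) = c m := by
  rw [P, coeff_sum]
  rw [Finset.sum_eq_single m]
  · simp [coeff_monomial]
  · intro b _ hb
    rw [coeff_monomial, if_neg]
    intro h
    exact hb (Subtype.ext (expOf_injective d h))
  · simp

lemma P_ne_zero {c : T d → ℂ} (hc : c ≠ 0) : P d c ≠ 0 := by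
  obtain ⟨m, hm⟩ := Function.ne_iff.mp hc
  intro h
  apply hm
  have := coeff_P d c m
  rw [h] at this
  simpa using this.symm

lemma exists_rep {f : MvPolynomial (Fin 3) ℂ} (hf : f.IsHomogeneous d) :
    ∃ c : T d → ℂ, P d c = f := by
  refine ⟨fun m => coeff (expOf d m.1) f, ?_⟩
  apply MvPolynomial.ext
  intro u
  by_cases hu : ∃ m : T d, expOf d m.1 = u
  · obtain ⟨m, rfl⟩ := hu
    exact coeff_P d _ m
  · rw [P, coeff_sum]
    rw [Finset.sum_eq_zero, eq_comm]
    · by_contra hne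
      have hdeg : u.degree = d := by
        by_contra h
        exact hne (hf.coeff_eq_zero h)
      refine hu ⟨⟨fun i => ⟨u i, ?_⟩, ?_⟩, ?_⟩
      · have : u i ≤ u.degree := by
          rw [Finsupp.degree]
          by_cases hiu : i ∈ u.support
          · exact Finset.single_le_sum (fun j _ => Nat.zero_le _) hiu
          · simp [Finsupp.notMem_support_iff.mp hiu]
        omega
      · show ∑ i : Fin 3, u i = d
        rw [← hdeg, Finsupp.degree]
        refine (Finset.sum_subset (Finset.subset_univ _) ?_).symm
        intro i _ hi
        simpa using Finsupp.notMem_support_iff.mp hi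
      · apply Finsupp.ext; intro i; rfl
    · intro m _
      rw [coeff_monomial, if_neg]
      exact fun h => hu ⟨m, h⟩



/-- growth bound: if a complex polynomial has no roots in the ball of radius ε around 0,
then its value at 1 is controlled by its value at 0. -/
lemma growth (p : Polynomial ℂ) {ε : ℝ} (hε : 0 < ε)
    (hroots : ∀ t : ℂ, ‖t‖ < ε → p.eval t ≠ 0) :
    ‖p.eval 1‖ ≤ ‖p.eval 0‖ * (1 + 1 / ε) ^ p.natDegree := by
  have hp0 : p.eval 0 ≠ 0 := hroots 0 (by simpa using hε)
  have hp : p ≠ 0 := fun h => hp0 (by simp [h])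
  have hsplit : Polynomial.Splits p := IsAlgClosed.splits p
  have hcard : p.roots.card = p.natDegree := (Polynomial.splits_iff_card_roots.mp hsplit)
  have hfac := Polynomial.C_leadingCoeff_mul_prod_multiset_X_sub_C hcard
  have heval : ∀ z : ℂ, ‖p.eval z‖
      = ‖p.leadingCoeff‖ * (p.roots.map fun r => ‖z - r‖).prod := by
    intro z
    conv_lhs => rw [← hfac]
    rw [Polynomial.eval_mul, Polynomial.eval_C, norm_mul, Polynomial.eval_multiset_prod, Multiset.map_map]
    congr 1
    rw [← normHom_apply, map_multiset_prod, Multiset.map_map]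
    congr 1
    ext r
    simp
  have hroot_big : ∀ r ∈ p.roots, ε ≤ ‖r‖ := by
    intro r hr
    by_contra h
    exact hroots r (lt_of_not_ge h) ((Polynomial.mem_roots hp).mp hr)
  rw [heval 1, heval 0, mul_assoc]
  refine mul_le_mul_of_nonneg_left ?_ (norm_nonneg _)
  have step1 : (p.roots.map fun r => ‖1 - r‖).prod
      ≤ (p.roots.map fun r => (1 + 1 / ε) * ‖0 - r‖).prod := by
    refine Multiset.prod_map_le_prod_map₀ _ _ (fun r _ => norm_nonneg _) ?_
    intro r hr
    have h1 : ε ≤ ‖r‖ := hroot_big r hr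
    have h2 : ‖1 - r‖ ≤ 1 + ‖r‖ := by
      calc ‖1 - r‖ ≤ ‖(1:ℂ)‖ + ‖r‖ := by
            simpa [sub_eq_add_neg] using norm_add_le (1:ℂ) (-r)
        _ = 1 + ‖r‖ := by simp
    have h3 : (1 : ℝ) ≤ ‖r‖ / ε := (one_le_div hε).2 h1
    have h4 : ‖0 - r‖ = ‖r‖ := by simp
    rw [h4]
    have : (1 + 1 / ε) * ‖r‖ = ‖r‖ + ‖r‖ / ε := by ring
    rw [this]
    linarith
  refine step1.trans ?_
  have step2 : (p.roots.map fun r => (1 + 1 / ε) * ‖0 - r‖).prod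
      = (1 + 1 / ε) ^ p.natDegree * (p.roots.map fun r => ‖0 - r‖).prod := by
    rw [show (fun r : ℂ => (1 + 1 / ε) * ‖0 - r‖)
        = (fun r : ℂ => (fun _ : ℂ => (1 + 1 / ε)) r * (fun x : ℂ => ‖0 - x‖) r) from rfl,
      Multiset.prod_map_mul, Multiset.map_const', Multiset.prod_replicate, hcard]
  rw [step2, mul_comm]






noncomputable def L (v w : Fin 3 → ℂ) (c : T d → ℂ) : Polynomial ℂ :=
  ∑ m : T d, Polynomial.C (c m) *
    ∏ i, (Polynomial.C (v i) + Polynomial.C (w i) * Polynomial.X) ^ (m.1 i : ℕ)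

lemma eval_L (v w : Fin 3 → ℂ) (c : T d → ℂ) (t : ℂ) :
    (L d v w c).eval t = E d c (fun i => v i + w i * t) := by
  rw [L, E, Polynomial.eval_finset_sum]
  refine Finset.sum_congr rfl fun m _ => ?_
  rw [Polynomial.eval_mul, Polynomial.eval_C, Polynomial.eval_prod]
  simp

lemma natDegree_L (v w : Fin 3 → ℂ) (c : T d → ℂ) : (L d v w c).natDegree ≤ d := by
  refine Polynomial.natDegree_sum_le_of_forall_le _ _ fun m _ => ?_
  refine (Polynomial.natDegree_C_mul_le _ _).trans ?_
  refine (Polynomial.natDegree_prod_le _ _).trans ?_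
  have hterm : ∀ i : Fin 3,
      ((Polynomial.C (v i) + Polynomial.C (w i) * Polynomial.X) ^ (m.1 i : ℕ)).natDegree
        ≤ (m.1 i : ℕ) := by
    intro i
    refine Polynomial.natDegree_pow_le.trans ?_
    have h1 : (Polynomial.C (v i) + Polynomial.C (w i) * Polynomial.X).natDegree ≤ 1 := by
      refine (Polynomial.natDegree_add_le _ _).trans ?_
      simp only [Polynomial.natDegree_C, max_le_iff]
      exact ⟨Nat.zero_le _, (Polynomial.natDegree_C_mul_le _ _).trans Polynomial.natDegree_X_le⟩
    calc (m.1 i : ℕ) * (Polynomial.C (v i) + Polynomial.C (w i) * Polynomial.X).natDegree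
        ≤ (m.1 i : ℕ) * 1 := Nat.mul_le_mul_left _ h1
      _ = (m.1 i : ℕ) := Nat.mul_one _
  have hsum := Finset.sum_le_sum (s := (Finset.univ : Finset (Fin 3)))
    (f := fun i : Fin 3 =>
      ((Polynomial.C (v i) + Polynomial.C (w i) * Polynomial.X) ^ (m.1 i : ℕ)).natDegree)
    (g := fun i : Fin 3 => (m.1 i : ℕ)) (fun i _ => hterm i)
  exact hsum.trans (le_of_eq m.2)

lemma continuous_E : Continuous (fun p : (T d → ℂ) × (Fin 3 → ℂ) => E d p.1 p.2) := by
  refine continuous_finset_sum _ fun m _ => ?_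
  refine Continuous.mul (by fun_prop) ?_
  exact continuous_finset_prod _ fun i _ => by fun_prop

lemma E_smul_right (c : T d → ℂ) (a : ℂ) (v : Fin 3 → ℂ) :
    E d c (a • v) = a ^ d * E d c v := by
  rw [E, E, Finset.mul_sum]
  refine Finset.sum_congr rfl fun m _ => ?_
  have : ∏ i, (a • v) i ^ (m.1 i : ℕ) = a ^ d * ∏ i, v i ^ (m.1 i : ℕ) := by
    have : ∀ i : Fin 3, (a • v) i ^ (m.1 i : ℕ) = a ^ (m.1 i : ℕ) * v i ^ (m.1 i : ℕ) := by
      intro i; rw [Pi.smul_apply, smul_eq_mul, mul_pow]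
    rw [Finset.prod_congr rfl fun i _ => this i, Finset.prod_mul_distrib,
      Finset.prod_pow_eq_pow_sum, m.2]
  rw [this]; ring

lemma E_smul_left (c : T d → ℂ) (a : ℂ) (v : Fin 3 → ℂ) :
    E d (a • c) v = a * E d c v := by
  rw [E, E, Finset.mul_sum]
  refine Finset.sum_congr rfl fun m _ => ?_
  rw [Pi.smul_apply, smul_eq_mul]; ring


lemma P_zero : P d 0 = 0 := by simp [P]

lemma projZeroSet_P_smul {a : ℂ} (ha : a ≠ 0) (c : T d → ℂ) :
    projZeroSet (P d (a • c)) = projZeroSet (P d c) := by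
  ext x
  constructor <;> rintro ⟨v, hv, hmk, hev⟩ <;> refine ⟨v, hv, hmk, ?_⟩
  · rw [eval_P] at hev ⊢
    rw [E_smul_left] at hev
    exact (mul_eq_zero.mp hev).resolve_left ha
  · rw [eval_P] at hev ⊢
    rw [E_smul_left, hev, mul_zero]

end Stmt7Aux

set_option maxHeartbeats 1000000 in
open Stmt7Aux in
/-- The set of projective zero sets of nonzero homogeneous polynomials of a fixed degree
`d` on `ℂ³` is closed in the space of nonempty compact subsets of `ℂP²` with the
Hausdorff metric. -/
theorem stmt_7 (d : ℕ) [MetricSpace (Projectivization ℂ (Fin 3 → ℂ))]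
    (hquot : Topology.IsQuotientMap
      (fun v : {v : Fin 3 → ℂ // v ≠ 0} => Projectivization.mk ℂ v.1 v.2)) :
    IsClosed {S : TopologicalSpace.NonemptyCompacts (Projectivization ℂ (Fin 3 → ℂ)) |
      ∃ f : MvPolynomial (Fin 3) ℂ, f ≠ 0 ∧ f.IsHomogeneous d ∧
        (S : Set (Projectivization ℂ (Fin 3 → ℂ))) = projZeroSet f} := by
  apply IsSeqClosed.isClosed
  intro Sseq S hmem hS
  -- choose normalized coefficient vectors
  have hrep : ∀ n, ∃ c : T d → ℂ, ‖c‖ = 1 ∧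
      ((Sseq n : Set (Projectivization ℂ (Fin 3 → ℂ)))) = projZeroSet (P d c) := by
    intro n
    obtain ⟨f, hf0, hfh, hfs⟩ := hmem n
    obtain ⟨c', hc'⟩ := exists_rep d hfh
    have hc'0 : c' ≠ 0 := by rintro rfl; rw [P_zero] at hc'; exact hf0 hc'.symm
    have hc'norm : ‖c'‖ ≠ 0 := by simpa using hc'0
    set a : ℂ := ((‖c'‖ : ℝ) : ℂ)⁻¹ with ha
    have ha0 : a ≠ 0 := by
      simp only [ha, ne_eq, inv_eq_zero, Complex.ofReal_eq_zero]
      exact hc'norm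
    refine ⟨a • c', ?_, ?_⟩
    · rw [norm_smul, ha, norm_inv, Complex.norm_real, Real.norm_eq_abs,
        abs_of_nonneg (norm_nonneg _)]
      field_simp
    · rw [projZeroSet_P_smul d ha0, hc', hfs]
  choose cseq hcnorm hset using hrep
  -- extract a convergent subsequence of the coefficients
  obtain ⟨c, hcmem, φ, hφ, hφt⟩ :=
    (isCompact_sphere (0 : T d → ℂ) 1).tendsto_subseq
      (x := cseq) (fun n => by simpa [mem_sphere_zero_iff_norm] using hcnorm n)
  have hcn : ‖c‖ = 1 := mem_sphere_zero_iff_norm.mp hcmem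
  have hc0 : c ≠ 0 := fun h => by simp [h] at hcn
  refine ⟨P d c, P_ne_zero d hc0, isHomogeneous_P d c, ?_⟩
  -- Hausdorff distances tend to zero
  have hdist : Tendsto (fun n => hausdorffDist (Sseq n : Set (Projectivization ℂ (Fin 3 → ℂ))) (S : Set (Projectivization ℂ (Fin 3 → ℂ)))) atTop (𝓝 0) := by
    have := tendsto_iff_dist_tendsto_zero.mp hS
    simpa [NonemptyCompacts.dist_eq] using this
  have hfin : ∀ (A B : TopologicalSpace.NonemptyCompacts (Projectivization ℂ (Fin 3 → ℂ))),
      EMetric.hausdorffEdist (A : Set (Projectivization ℂ (Fin 3 → ℂ))) (B : Set (Projectivization ℂ (Fin 3 → ℂ))) ≠ ⊤ := fun A B =>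
    hausdorffEdist_ne_top_of_nonempty_of_bounded A.nonempty B.nonempty
      A.isCompact.isBounded B.isCompact.isBounded
  ext x
  constructor
  · -- x ∈ S → x is a zero of the limit polynomial
    intro hx
    have hpts : ∀ n, ∃ y ∈ (Sseq (φ n) : Set (Projectivization ℂ (Fin 3 → ℂ))),
        dist x y ≤ hausdorffDist (Sseq (φ n) : Set (Projectivization ℂ (Fin 3 → ℂ))) (S : Set (Projectivization ℂ (Fin 3 → ℂ))) := by
      intro n
      obtain ⟨y, hy, hyd⟩ := (Sseq (φ n)).isCompact.exists_infDist_eq_dist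
        (Sseq (φ n)).nonempty x
      refine ⟨y, hy, ?_⟩
      rw [← hyd, hausdorffDist_comm]
      exact infDist_le_hausdorffDist_of_mem hx (hfin S (Sseq (φ n)))
    choose y hy hyd using hpts
    have hyx : Tendsto y atTop (𝓝 x) := by
      rw [tendsto_iff_dist_tendsto_zero]
      refine squeeze_zero (g := fun n => hausdorffDist
          (Sseq (φ n) : Set (Projectivization ℂ (Fin 3 → ℂ)))
          (S : Set (Projectivization ℂ (Fin 3 → ℂ))))
        (fun n => dist_nonneg) (fun n => by rw [dist_comm]; exact hyd n) ?_
      exact hdist.comp hφ.tendsto_atTop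
    have hlift : ∀ n, ∃ v : Fin 3 → ℂ, ∃ hv : v ≠ 0, ‖v‖ = 1 ∧
        Projectivization.mk ℂ v hv = y n ∧ E d (cseq (φ n)) v = 0 := by
      intro n
      have := hy n
      rw [hset (φ n)] at this
      obtain ⟨v, hv, hmk, hev⟩ := this
      have hvn : ‖v‖ ≠ 0 := by simpa using hv
      set b : ℂ := ((‖v‖ : ℝ) : ℂ)⁻¹ with hb
      have hb0 : b ≠ 0 := by
        simp only [hb, ne_eq, inv_eq_zero, Complex.ofReal_eq_zero]; exact hvn
      refine ⟨b • v, smul_ne_zero hb0 hv, ?_, ?_, ?_⟩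
      · rw [norm_smul, hb, norm_inv, Complex.norm_real, Real.norm_eq_abs,
          abs_of_nonneg (norm_nonneg _)]
        field_simp
      · rw [← hmk, Projectivization.mk_eq_mk_iff']
        exact ⟨b, rfl⟩
      · rw [E_smul_right, eval_P] at *
        rw [hev, mul_zero]
    choose v hvne hvnorm hvmk hvev using hlift
    obtain ⟨v₀, hv₀mem, ψ, hψ, hψt⟩ :=
      (isCompact_sphere (0 : Fin 3 → ℂ) 1).tendsto_subseq
        (x := v) (fun n => by simpa [mem_sphere_zero_iff_norm] using hvnorm n)
    have hv₀n : ‖v₀‖ = 1 := mem_sphere_zero_iff_norm.mp hv₀mem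
    have hv₀ : v₀ ≠ 0 := fun h => by simp [h] at hv₀n
    have hE0 : E d c v₀ = 0 := by
      have h1 : Tendsto (fun n => (cseq (φ (ψ n)), v (ψ n))) atTop (𝓝 (c, v₀)) :=
        (hφt.comp hψ.tendsto_atTop).prodMk_nhds hψt
      have h2 := ((continuous_E d).tendsto (c, v₀)).comp h1
      have h3 : (fun n => E d (cseq (φ (ψ n))) (v (ψ n))) = fun _ => (0 : ℂ) := by
        funext n; exact hvev (ψ n)
      rw [show ((fun p : (T d → ℂ) × (Fin 3 → ℂ) => E d p.1 p.2) ∘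
        (fun n => (cseq (φ (ψ n)), v (ψ n)))) = fun n => E d (cseq (φ (ψ n))) (v (ψ n))
        from rfl, h3] at h2
      exact (tendsto_const_nhds_iff.mp h2).symm
    refine ⟨v₀, hv₀, ?_, by rw [eval_P]; exact hE0⟩
    -- mk v₀ = x by uniqueness of limits
    have hsub : Tendsto (fun n => (⟨v (ψ n), hvne (ψ n)⟩ : {p : Fin 3 → ℂ // p ≠ 0}))
        atTop (𝓝 ⟨v₀, hv₀⟩) := by
      rw [tendsto_subtype_rng]
      exact hψt
    have hmkt := (hquot.continuous.tendsto ⟨v₀, hv₀⟩).comp hsub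
    have heq : ((fun p : {p : Fin 3 → ℂ // p ≠ 0} => Projectivization.mk ℂ p.1 p.2) ∘
        (fun n => (⟨v (ψ n), hvne (ψ n)⟩ : {p : Fin 3 → ℂ // p ≠ 0})))
        = fun n => y (ψ n) := by
      funext n; exact hvmk (ψ n)
    rw [heq] at hmkt
    exact tendsto_nhds_unique hmkt (hyx.comp hψ.tendsto_atTop)
  · -- zeros of the limit polynomial lie in S
    rintro ⟨v, hv, hmkv, hev⟩
    rw [eval_P] at hev
    obtain ⟨u, hu⟩ : ∃ u, E d c u ≠ 0 := by
      by_contra h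
      push_neg at h
      refine P_ne_zero d hc0 (MvPolynomial.funext fun z => ?_)
      rw [eval_P, h z, map_zero]
    set w : Fin 3 → ℂ := fun i => u i - v i with hw
    set p : ℕ → Polynomial ℂ := fun n => L d v w (cseq (φ n)) with hp
    set q : Polynomial ℂ := L d v w c with hq
    have hq0 : q.eval 0 = 0 := by
      rw [hq, eval_L]
      have h : (fun i => v i + w i * 0) = v := by funext i; ring
      rw [h]; exact hev
    have hq1 : q.eval 1 = E d c u := by
      rw [hq, eval_L]
      have h : (fun i => v i + w i * 1) = u := by funext i; simp [hw]
      rw [h]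
    have hptend : ∀ t : ℂ, Tendsto (fun n => (p n).eval t) atTop (𝓝 (q.eval t)) := by
      intro t
      have h1 : Tendsto (fun n => (cseq (φ n), fun i => v i + w i * t)) atTop
          (𝓝 (c, fun i => v i + w i * t)) := hφt.prodMk_nhds tendsto_const_nhds
      have h2 := ((continuous_E d).tendsto _).comp h1
      simp only [hp, hq, eval_L]
      exact h2
    have hvpos : (0 : ℝ) < ‖v‖ := norm_pos_iff.mpr hv
    have hrpos : (0 : ℝ) < ‖v‖ / (‖w‖ + 1) := div_pos hvpos (add_pos_of_nonneg_of_pos (norm_nonneg w) one_pos)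
    set r : ℝ := ‖v‖ / (‖w‖ + 1) with hr
    have hne : ∀ t : ℂ, ‖t‖ < r → (fun i => v i + w i * t) ≠ (0 : Fin 3 → ℂ) := by
      intro t ht hzero
      have hvw : v = (-t) • w := by
        funext i
        have h0 := congrFun hzero i
        simp only [Pi.zero_apply] at h0
        simp only [Pi.smul_apply, smul_eq_mul]
        linear_combination h0
      have hnv : ‖v‖ = ‖t‖ * ‖w‖ := by
        rw [hvw, norm_smul, norm_neg]
      have h1 : ‖t‖ * ‖w‖ ≤ ‖t‖ * (‖w‖ + 1) := by
        have := norm_nonneg t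
        nlinarith
      have h3 : r * (‖w‖ + 1) = ‖v‖ := by
        rw [hr]; field_simp
      have h2 : ‖t‖ * (‖w‖ + 1) < r * (‖w‖ + 1) := by
        have : (0:ℝ) < ‖w‖ + 1 := by positivity
        exact mul_lt_mul_of_pos_right ht this
      linarith
    have hEu : (0:ℝ) < ‖E d c u‖ := by
      simpa using hu
    have key : ∀ ε : ℝ, 0 < ε →
        ∀ᶠ n in atTop, ∃ t : ℂ, ‖t‖ < ε ∧ (p n).eval t = 0 := by
      intro ε hε
      by_contra hcon
      rw [Filter.not_eventually] at hcon
      have hK1 : (1:ℝ) ≤ 1 + 1/ε := by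
        have : 0 < 1/ε := by positivity
        linarith
      have hKpos : (0:ℝ) < (1 + 1/ε) ^ d := by positivity
      have habs0 : Tendsto (fun n => ‖(p n).eval 0‖) atTop (𝓝 0) := by
        have := (continuous_norm.tendsto _).comp (hptend 0)
        simpa [hq0, Function.comp_def] using this
      have habs1 : Tendsto (fun n => ‖(p n).eval 1‖) atTop
          (𝓝 (‖E d c u‖)) := by
        have := (continuous_norm.tendsto _).comp (hptend 1)
        simpa [hq1, Function.comp_def] using this
      have hev0 : ∀ᶠ n in atTop, ‖(p n).eval 0‖
          < (‖E d c u‖ / 2) / (1 + 1/ε)^d :=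
        habs0.eventually_lt_const (by positivity)
      have hev1 : ∀ᶠ n in atTop,
          ‖E d c u‖ / 2 < ‖(p n).eval 1‖ :=
        habs1.eventually_const_lt (by linarith)
      obtain ⟨n, hn, hn0, hn1⟩ := (hcon.and_eventually (hev0.and hev1)).exists
      push_neg at hn
      have hg := growth (p n) hε hn
      have hdeg : (1 + 1/ε) ^ (p n).natDegree ≤ (1 + 1/ε)^d :=
        pow_le_pow_right₀ hK1 (natDegree_L d v w _)
      have hmul : ‖(p n).eval 1‖
          ≤ ‖(p n).eval 0‖ * (1 + 1/ε)^d := by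
        refine hg.trans ?_
        exact mul_le_mul_of_nonneg_left hdeg (norm_nonneg _)
      have hsm : ‖(p n).eval 0‖ * (1 + 1/ε)^d
          < ‖E d c u‖ / 2 := by
        have := (lt_div_iff₀ hKpos).mp hn0
        linarith
      linarith
    have key2 : ∀ j : ℕ, ∀ᶠ n in atTop,
        ∃ t : ℂ, ‖t‖ < min r ((1:ℝ)/(j+1)) ∧ (p n).eval t = 0 :=
      fun j => key _ (lt_min hrpos (by positivity))
    obtain ⟨ρ, hρ, hρP⟩ := Filter.extraction_forall_of_eventually key2
    choose t ht htz using hρP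
    have htr : ∀ j, ‖t j‖ < r := fun j => (ht j).trans_le (min_le_left _ _)
    have htsmall : Tendsto t atTop (𝓝 0) := by
      rw [tendsto_iff_dist_tendsto_zero]
      simp only [dist_zero_right]
      refine squeeze_zero (g := fun j : ℕ => (1:ℝ)/(j+1)) (fun j => norm_nonneg _)
        (fun j => ?_) tendsto_one_div_add_atTop_nhds_zero_nat
      exact le_of_lt ((ht j).trans_le (min_le_right _ _))
    have hvt : ∀ j, (fun i => v i + w i * t j) ≠ (0 : Fin 3 → ℂ) := fun j => hne _ (htr j)
    set y : ℕ → Projectivization ℂ (Fin 3 → ℂ) :=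
      fun j => Projectivization.mk ℂ (fun i => v i + w i * t j) (hvt j) with hy
    have hyS : ∀ j, y j ∈ (Sseq (φ (ρ j)) : Set (Projectivization ℂ (Fin 3 → ℂ))) := by
      intro j
      rw [hset (φ (ρ j))]
      exact ⟨_, hvt j, rfl, by rw [eval_P, ← eval_L]; exact htz j⟩
    have hyx : Tendsto y atTop (𝓝 x) := by
      rw [← hmkv]
      have hsub : Tendsto (fun j => (⟨fun i => v i + w i * t j, hvt j⟩ :
          {p : Fin 3 → ℂ // p ≠ 0})) atTop (𝓝 ⟨v, hv⟩) := by
        rw [tendsto_subtype_rng]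
        have hc : Continuous (fun s : ℂ => (fun i => v i + w i * s : Fin 3 → ℂ)) :=
          continuous_pi fun i => by fun_prop
        have h4 := (hc.tendsto 0).comp htsmall
        have h5 : (fun i => v i + w i * (0:ℂ)) = v := by funext i; ring
        rw [h5] at h4
        exact h4
      exact (hquot.continuous.tendsto ⟨v, hv⟩).comp hsub
    have hinf : infDist x (S : Set (Projectivization ℂ (Fin 3 → ℂ))) = 0 := by
      refine le_antisymm ?_ infDist_nonneg
      have hle : ∀ j, infDist x (S : Set (Projectivization ℂ (Fin 3 → ℂ)))
          ≤ hausdorffDist (Sseq (φ (ρ j)) : Set (Projectivization ℂ (Fin 3 → ℂ)))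
              (S : Set (Projectivization ℂ (Fin 3 → ℂ))) + dist x (y j) := by
        intro j
        calc infDist x (S : Set (Projectivization ℂ (Fin 3 → ℂ)))
            ≤ infDist (y j) (S : Set (Projectivization ℂ (Fin 3 → ℂ))) + dist x (y j) :=
              infDist_le_infDist_add_dist
          _ ≤ hausdorffDist (Sseq (φ (ρ j)) : Set (Projectivization ℂ (Fin 3 → ℂ)))
              (S : Set (Projectivization ℂ (Fin 3 → ℂ))) + dist x (y j) := by
              gcongr
              exact infDist_le_hausdorffDist_of_mem (hyS j) (hfin _ _)
      have hrhs : Tendsto (fun j => hausdorffDist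
          (Sseq (φ (ρ j)) : Set (Projectivization ℂ (Fin 3 → ℂ)))
          (S : Set (Projectivization ℂ (Fin 3 → ℂ))) + dist x (y j)) atTop (𝓝 0) := by
        have h1 := hdist.comp ((hφ.comp hρ).tendsto_atTop)
        have h2 := tendsto_iff_dist_tendsto_zero.mp hyx
        have h2' : Tendsto (fun j => dist x (y j)) atTop (𝓝 0) := by
          simpa [dist_comm] using h2
        simpa using h1.add h2'
      exact ge_of_tendsto hrhs (Filter.Eventually.of_forall hle)
    exact (S.isCompact.isClosed.mem_iff_infDist_zero S.nonempty).mpr hinf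
end

section
/- Let x₁,…,x_k with k ≤ 6 be points of ℂP² in general position (no 3 on a line, no 6 on a conic). Then the space of homogeneous quintics on ℂ³ that are singular at each x_i is a linear subspace of complex dimension 21 − 3k. -/
open MvPolynomial

/-- The linear condition on a polynomial: its `j`-th partial derivative vanishes at `v`. -/
noncomputable def pderivEval (v : Fin 3 → ℂ) (j : Fin 3) :
    MvPolynomial (Fin 3) ℂ →ₗ[ℂ] ℂ :=
  (MvPolynomial.aeval v).toLinearMap ∘ₗ (MvPolynomial.pderiv j).toLinearMap

open Finset

lemma pderivEval_eq (x : Fin 3 → ℂ) (j : Fin 3) (p : MvPolynomial (Fin 3) ℂ) :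
    pderivEval x j p = eval x (pderiv j p) := rfl

noncomputable def linForm (a : Fin 3 → ℂ) : MvPolynomial (Fin 3) ℂ := ∑ m, C (a m) * X m

lemma linForm_isHomogeneous (a : Fin 3 → ℂ) : (linForm a).IsHomogeneous 1 :=
  MvPolynomial.IsHomogeneous.sum _ _ _ fun m _ => (isHomogeneous_C _ _).mul (isHomogeneous_X _ _)

lemma eval_linForm (a x : Fin 3 → ℂ) : eval x (linForm a) = ∑ m, a m * x m := by
  simp [linForm]

lemma pderiv_linForm (a : Fin 3 → ℂ) (j : Fin 3) : pderiv j (linForm a) = C (a j) := by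
  rw [linForm, map_sum]
  rw [Finset.sum_eq_single j]
  · simp
  · intro m _ hm; simp [pderiv_X_of_ne hm]
  · simp

lemma coeff_linForm (a : Fin 3 → ℂ) (m : Fin 3) :
    coeff (Finsupp.single m 1) (linForm a) = a m := by
  rw [linForm, coeff_sum]
  rw [Finset.sum_eq_single m]
  · simp [coeff_C_mul, coeff_X]
  · intro b _ hb
    rw [coeff_C_mul, X, coeff_monomial, if_neg, mul_zero]
    exact fun h => hb ((Finsupp.single_left_inj one_ne_zero).mp h)
  · simp

lemma linForm_ne_zero {a : Fin 3 → ℂ} (ha : a ≠ 0) : linForm a ≠ 0 := by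
  intro h
  apply ha
  funext m
  have := coeff_linForm a m
  rw [h] at this
  simpa using this.symm

lemma degree_eq_sum_fin3 (d : Fin 3 →₀ ℕ) : Finsupp.degree d = ∑ i, d i :=
  Finset.sum_subset (Finset.subset_univ _)
    (fun i _ h => Finsupp.notMem_support_iff.mp h)

lemma euler_eval {n : ℕ} {q : MvPolynomial (Fin 3) ℂ} (hq : q.IsHomogeneous n) (x : Fin 3 → ℂ) :
    ∑ j, x j * eval x (pderiv j q) = (n : ℂ) * eval x q := by
  conv_lhs => rw [q.as_sum]
  conv_rhs => rw [q.as_sum]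
  simp only [map_sum, Finset.mul_sum]
  rw [Finset.sum_comm]
  refine Finset.sum_congr rfl fun d hd => ?_
  have hdeg : ∑ j, d j = n := by
    have h1 : Finsupp.degree d = n := by
      rw [Finsupp.degree_eq_weight_one]
      exact hq (mem_support_iff.mp hd)
    rw [← h1, degree_eq_sum_fin3]
  set c := coeff d q with hc
  have key : ∀ j, x j * eval x (pderiv j (monomial d c)) = (d j : ℂ) * (c * ∏ i, x i ^ d i) := by
    intro j
    rw [pderiv_monomial, eval_monomial]
    rw [Finsupp.prod_fintype _ _ (fun i => pow_zero _)]
    rcases Nat.eq_zero_or_pos (d j) with h0 | hpos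
    · simp [h0]
    · have hsub : ∀ i, (d - Finsupp.single j 1 : Fin 3 →₀ ℕ) i = if i = j then d j - 1 else d i := by
        intro i
        rw [Finsupp.tsub_apply]
        rcases eq_or_ne i j with rfl | hij
        · simp
        · rw [if_neg hij, Finsupp.single_eq_of_ne' (Ne.symm hij), Nat.sub_zero]
      have hP : ∏ i, x i ^ ((d - Finsupp.single j 1 : Fin 3 →₀ ℕ) i)
          = x j ^ (d j - 1) * ∏ i ∈ Finset.univ.erase j, x i ^ d i := by
        rw [← Finset.mul_prod_erase Finset.univ _ (Finset.mem_univ j)]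
        congr 1
        · rw [hsub]; simp
        · exact Finset.prod_congr rfl fun i hi => by
            rw [hsub, if_neg (Finset.mem_erase.mp hi).1]
      have hQ : ∏ i, x i ^ d i = x j ^ d j * ∏ i ∈ Finset.univ.erase j, x i ^ d i :=
        (Finset.mul_prod_erase Finset.univ _ (Finset.mem_univ j)).symm
      rw [hP, hQ]
      have hxp : x j * x j ^ (d j - 1) = x j ^ d j := by
        rw [← pow_succ']
        congr 1
        omega
      calc x j * (c * ↑(d j) * (x j ^ (d j - 1) * ∏ i ∈ Finset.univ.erase j, x i ^ d i))
          = (d j : ℂ) * (c * ((x j * x j ^ (d j - 1)) * ∏ i ∈ Finset.univ.erase j, x i ^ d i)) := by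
            ring
        _ = (d j : ℂ) * (c * (x j ^ d j * ∏ i ∈ Finset.univ.erase j, x i ^ d i)) := by
            rw [hxp]
  simp only [key]
  rw [← Finset.sum_mul, eval_monomial, Finsupp.prod_fintype _ _ (fun i => pow_zero _)]
  have : (∑ j, (d j : ℂ)) = (n : ℂ) := by
    rw [← Nat.cast_sum, hdeg]
  rw [this]

noncomputable def degEquiv (n : ℕ) :
    {d : Fin 3 →₀ ℕ | Finsupp.degree d = n} ≃ {x // x ∈ Finset.Nat.antidiagonalTuple 3 n} where
  toFun d := ⟨⇑d.1, by
    rw [Finset.Nat.mem_antidiagonalTuple, ← degree_eq_sum_fin3]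
    exact d.2⟩
  invFun x := ⟨Finsupp.equivFunOnFinite.symm x.1, by
    show Finsupp.degree _ = n
    rw [degree_eq_sum_fin3]
    have := Finset.Nat.mem_antidiagonalTuple.mp x.2
    simpa using this⟩
  left_inv d := by
    apply Subtype.ext
    simp
  right_inv x := by
    apply Subtype.ext
    exact Finsupp.equivFunOnFinite.apply_symm_apply x.1

noncomputable def homogEquiv (n : ℕ) :
    (homogeneousSubmodule (Fin 3) ℂ n) ≃ₗ[ℂ]
      ({x // x ∈ Finset.Nat.antidiagonalTuple 3 n} → ℂ) :=
  (LinearEquiv.ofEq _ _ (homogeneousSubmodule_eq_finsupp_supported (σ := Fin 3) ℂ n)).trans <|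
    (AddMonoidAlgebra.supportedEquivFinsupp _).trans <|
      (Finsupp.domLCongr (degEquiv n)).trans (Finsupp.linearEquivFunOnFinite ℂ ℂ _)

instance homogFD (n : ℕ) : FiniteDimensional ℂ (homogeneousSubmodule (Fin 3) ℂ n) :=
  Module.Finite.equiv (homogEquiv n).symm

lemma finrank_homog (n : ℕ) :
    Module.finrank ℂ (homogeneousSubmodule (Fin 3) ℂ n)
      = (Finset.Nat.antidiagonalTuple 3 n).card := by
  rw [(homogEquiv n).finrank_eq, Module.finrank_pi, Fintype.card_coe]

lemma grad_sq_mul (q l : MvPolynomial (Fin 3) ℂ) (x : Fin 3 → ℂ) (j : Fin 3) :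
    eval x (pderiv j (q * q * l))
      = 2 * eval x q * eval x (pderiv j q) * eval x l
        + (eval x q) ^ 2 * eval x (pderiv j l) := by
  simp only [pderiv_mul, map_add, map_mul]
  ring

/-- Let `x₁,…,x_k` (`k ≤ 6`) be points of `ℂP²` in general position (no three on a line,
no six on a conic), given by nonzero, pairwise non-proportional vectors in `ℂ³`. Then the
space of homogeneous quintics singular at each of these points has complex dimension
`21 - 3k`. -/
theorem stmt_11 (k : ℕ) (hk : k ≤ 6) (v : Fin k → (Fin 3 → ℂ))
    (hv0 : ∀ i, v i ≠ 0)
    (hdist : ∀ i j, i ≠ j → ∀ c : ℂ, v i ≠ c • v j)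
    (hline : ∀ g : MvPolynomial (Fin 3) ℂ, g ≠ 0 → g.IsHomogeneous 1 →
      ({i : Fin k | MvPolynomial.eval (v i) g = 0}).ncard ≤ 2)
    (hconic : ∀ q : MvPolynomial (Fin 3) ℂ, q ≠ 0 → q.IsHomogeneous 2 →
      ({i : Fin k | MvPolynomial.eval (v i) q = 0}).ncard ≤ 5) :
    Module.finrank ℂ
      ↥(Submodule.comap (MvPolynomial.homogeneousSubmodule (Fin 3) ℂ 5).subtype
        (⨅ i : Fin k, ⨅ j : Fin 3, LinearMap.ker (pderivEval (v i) j))) = 21 - 3 * k := by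
  classical
  -- no nonzero linear form vanishes at three of the points
  have hline3 : ∀ (a : Fin 3 → ℂ), a ≠ 0 → ∀ i₁ i₂ i₃ : Fin k, i₁ ≠ i₂ → i₁ ≠ i₃ → i₂ ≠ i₃ →
      (∑ m, a m * v i₁ m = 0) → (∑ m, a m * v i₂ m = 0) → (∑ m, a m * v i₃ m ≠ 0) := by
    intro a ha i1 i2 i3 h12 h13 h23 e1 e2 e3
    have h := hline (linForm a) (linForm_ne_zero ha) (linForm_isHomogeneous a)
    have hsub : ({i1, i2, i3} : Set (Fin k)) ⊆ {i | eval (v i) (linForm a) = 0} := by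
      intro z hz
      rcases hz with rfl | rfl | rfl <;> simp only [Set.mem_setOf_eq, eval_linForm] <;>
        assumption
    have h3 : ({i1, i2, i3} : Set (Fin k)).ncard = 3 :=
      Set.ncard_eq_three.mpr ⟨i1, i2, i3, h12, h13, h23, rfl⟩
    have hle := Set.ncard_le_ncard hsub (Set.toFinite _)
    omega
  -- lines through at most two of the points avoiding a third
  have line : ∀ (i : Fin k) (T : Finset (Fin k)), i ∉ T → T.card ≤ 2 →
      ∃ a : Fin 3 → ℂ, (∀ t ∈ T, ∑ m, a m * v t m = 0) ∧ ∑ m, a m * v i m ≠ 0 := by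
    intro i T hiT hT
    rcases (by omega : T.card = 0 ∨ T.card = 1 ∨ T.card = 2) with h | h | h
    · rw [Finset.card_eq_zero] at h
      subst h
      obtain ⟨m, hm⟩ : ∃ m, v i m ≠ 0 := by
        by_contra hc
        push_neg at hc
        exact hv0 i (funext hc)
      refine ⟨fun r => if r = m then 1 else 0, by simp, ?_⟩
      have : ∑ r, (if r = m then (1 : ℂ) else 0) * v i r = v i m := by
        rw [Finset.sum_eq_single m]
        · simp
        · intro b _ hb; simp [hb]
        · simp
      rw [this]
      exact hm
    · obtain ⟨t, rfl⟩ := Finset.card_eq_one.mp h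
      have hit : i ≠ t := by simpa using hiT
      obtain ⟨m, hm⟩ : ∃ m, v t m ≠ 0 := by
        by_contra hc
        push_neg at hc
        exact hv0 t (funext hc)
      obtain ⟨p, hp⟩ : ∃ p, v t m * v i p - v t p * v i m ≠ 0 := by
        by_contra hc
        push_neg at hc
        apply hdist i t hit (v i m / v t m)
        funext p
        have h0 := hc p
        rw [Pi.smul_apply, smul_eq_mul]
        field_simp
        linear_combination h0
      have hs : ∀ x : Fin 3 → ℂ,
          ∑ r, ((if r = p then 1 else 0) * v t m - (if r = m then 1 else 0) * v t p) * x r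
            = v t m * x p - v t p * x m := by
        intro x
        have e1 : ∑ r, (if r = p then (1:ℂ) else 0) * v t m * x r = v t m * x p := by
          rw [Finset.sum_eq_single p]
          · simp
          · intro b _ hb; simp [hb]
          · simp
        have e2 : ∑ r, (if r = m then (1:ℂ) else 0) * v t p * x r = v t p * x m := by
          rw [Finset.sum_eq_single m]
          · simp
          · intro b _ hb; simp [hb]
          · simp
        calc ∑ r, ((if r = p then (1:ℂ) else 0) * v t m - (if r = m then 1 else 0) * v t p) * x r
            = ∑ r, ((if r = p then (1:ℂ) else 0) * v t m * x r
                - (if r = m then (1:ℂ) else 0) * v t p * x r) := by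
              refine Finset.sum_congr rfl fun r _ => by ring
          _ = v t m * x p - v t p * x m := by
              rw [Finset.sum_sub_distrib, e1, e2]
      refine ⟨fun r => (if r = p then 1 else 0) * v t m - (if r = m then 1 else 0) * v t p,
        ?_, ?_⟩
      · intro t' ht'
        rw [Finset.mem_singleton] at ht'
        subst ht'
        rw [hs]
        ring
      · rw [hs]
        exact hp
    · obtain ⟨t₁, t₂, h12, rfl⟩ := Finset.card_eq_two.mp h
      have hit1 : i ≠ t₁ := fun he => hiT (by rw [he]; exact Finset.mem_insert_self _ _)
      have hit2 : i ≠ t₂ := fun he => hiT (by rw [he]; simp)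
      set a := crossProduct (v t₁) (v t₂) with hadef
      have ha : a ≠ 0 := by
        rw [hadef, crossProduct_ne_zero_iff_linearIndependent, linearIndependent_fin2]
        constructor
        · simpa using hv0 t₂
        · intro c hc
          exact hdist t₁ t₂ h12 c (by simpa using hc.symm)
      have horth1 : ∑ m, a m * v t₁ m = 0 := by
        simp only [hadef, crossProduct, Fin.sum_univ_three]
        simp [Matrix.cons_val_zero, Matrix.cons_val_one]
        ring
      have horth2 : ∑ m, a m * v t₂ m = 0 := by
        simp only [hadef, crossProduct, Fin.sum_univ_three]
        simp [Matrix.cons_val_zero, Matrix.cons_val_one]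
        ring
      refine ⟨a, ?_, ?_⟩
      · intro t ht
        rcases Finset.mem_insert.mp ht with rfl | ht
        · exact horth1
        · rw [Finset.mem_singleton] at ht
          subst ht
          exact horth2
      · exact hline3 a ha t₁ t₂ i h12 hit1.symm hit2.symm horth1 horth2
  -- conics through all points but one
  have conic : ∀ i : Fin k, ∃ q : MvPolynomial (Fin 3) ℂ, q.IsHomogeneous 2 ∧
      (∀ j, j ≠ i → eval (v j) q = 0) ∧ eval (v i) q ≠ 0 := by
    intro i
    by_cases hk5 : k ≤ 5
    · set S := Finset.univ.erase i with hSdef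
      have hScard : S.card ≤ 4 := by
        rw [hSdef, Finset.card_erase_of_mem (Finset.mem_univ i), Finset.card_univ,
          Fintype.card_fin]
        omega
      obtain ⟨T₁, hT₁S, hT₁card⟩ :=
        Finset.exists_subset_card_eq (show min 2 S.card ≤ S.card from min_le_right _ _)
      set T₂ := S \ T₁ with hT₂def
      have h1 : T₁.card ≤ 2 := by rw [hT₁card]; exact min_le_left _ _
      have h2 : T₂.card ≤ 2 := by
        rw [hT₂def, Finset.card_sdiff_of_subset hT₁S, hT₁card]
        omega
      have hi1 : i ∉ T₁ := fun hh => (Finset.mem_erase.mp (hT₁S hh)).1 rfl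
      have hi2 : i ∉ T₂ := fun hh => (Finset.mem_erase.mp (Finset.sdiff_subset hh)).1 rfl
      obtain ⟨a₁, ha₁, ha₁i⟩ := line i T₁ hi1 h1
      obtain ⟨a₂, ha₂, ha₂i⟩ := line i T₂ hi2 h2
      refine ⟨linForm a₁ * linForm a₂,
        (linForm_isHomogeneous a₁).mul (linForm_isHomogeneous a₂), ?_, ?_⟩
      · intro j hj
        have hjS : j ∈ S := Finset.mem_erase.mpr ⟨hj, Finset.mem_univ _⟩
        rw [map_mul, eval_linForm, eval_linForm]
        by_cases hjT : j ∈ T₁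
        · exact mul_eq_zero.mpr (Or.inl (ha₁ j hjT))
        · exact mul_eq_zero.mpr (Or.inr (ha₂ j (Finset.mem_sdiff.mpr ⟨hjS, hjT⟩)))
      · rw [map_mul, eval_linForm, eval_linForm]
        exact mul_ne_zero ha₁i ha₂i
    · have hk6 : k = 6 := by omega
      set E : (homogeneousSubmodule (Fin 3) ℂ 2) →ₗ[ℂ] (Fin k → ℂ) :=
        LinearMap.pi (fun j => (MvPolynomial.aeval (v j)).toLinearMap ∘ₗ
          (homogeneousSubmodule (Fin 3) ℂ 2).subtype) with hEdef
      have hEapp : ∀ (q : homogeneousSubmodule (Fin 3) ℂ 2) (j : Fin k),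
          E q j = eval (v j) (q : MvPolynomial (Fin 3) ℂ) := fun q j => rfl
      have hinj : Function.Injective E := by
        rw [← LinearMap.ker_eq_bot, Submodule.eq_bot_iff]
        intro q hq
        by_contra hq0
        have hne : (q : MvPolynomial (Fin 3) ℂ) ≠ 0 := fun hh => hq0 (Subtype.ext hh)
        have h5 := hconic q.1 hne q.2
        have huniv : {j : Fin k | eval (v j) (q : MvPolynomial (Fin 3) ℂ) = 0} = Set.univ := by
          apply Set.eq_univ_of_forall
          intro j
          have := congrFun (LinearMap.mem_ker.mp hq) j
          rw [hEapp] at this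
          exact this
        rw [huniv, Set.ncard_univ, Nat.card_eq_fintype_card, Fintype.card_fin, hk6] at h5
        omega
      have hsurjE : Function.Surjective E := by
        have hdim : Module.finrank ℂ (homogeneousSubmodule (Fin 3) ℂ 2)
            = Module.finrank ℂ (Fin k → ℂ) := by
          rw [finrank_homog, Module.finrank_pi, Fintype.card_fin, hk6]
          rfl
        exact (LinearMap.injective_iff_surjective_of_finrank_eq_finrank hdim).mp hinj
      obtain ⟨q, hq⟩ := hsurjE (fun j => if j = i then 1 else 0)
      refine ⟨q.1, q.2, ?_, ?_⟩
      · intro j hj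
        have := congrFun hq j
        rw [hEapp, if_neg hj] at this
        exact this
      · have := congrFun hq i
        rw [hEapp, if_pos rfl] at this
        rw [this]
        exact one_ne_zero
  -- quintics singular at all but one point, with arbitrary gradient at that point
  have key : ∀ (i : Fin k) (w : Fin 3 → ℂ), ∃ f : MvPolynomial (Fin 3) ℂ,
      f.IsHomogeneous 5 ∧ (∀ j, j ≠ i → ∀ m, eval (v j) (pderiv m f) = 0) ∧
      (∀ m, eval (v i) (pderiv m f) = w m) := by
    intro i w
    obtain ⟨q, hq2, hqz, hqi⟩ := conic i
    set x := v i with hxdef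
    set c := eval x q with hcdef
    set t := ∑ m, w m * x m with htdef
    set a : Fin 3 → ℂ :=
      fun m => w m / c ^ 2 - (2 * t / (5 * c ^ 3)) * eval x (pderiv m q) with hadef
    have heuler : ∑ m, x m * eval x (pderiv m q) = 2 * c := by
      have h := euler_eval hq2 x
      rw [h, hcdef]
      norm_num
    have hL : ∑ m, a m * x m = t / (5 * c ^ 2) := by
      have expand : ∑ m, a m * x m
          = (∑ m, w m * x m) / c ^ 2
            - (2 * t / (5 * c ^ 3)) * ∑ m, x m * eval x (pderiv m q) := by
        rw [Finset.mul_sum, Finset.sum_div, ← Finset.sum_sub_distrib]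
        refine Finset.sum_congr rfl fun m _ => ?_
        rw [hadef]
        ring
      rw [expand, heuler, ← htdef]
      field_simp
      ring
    refine ⟨q * q * linForm a, ?_, ?_, ?_⟩
    · have hh := (hq2.mul hq2).mul (linForm_isHomogeneous a)
      exact (by norm_num : (2 : ℕ) + 2 + 1 = 5) ▸ hh
    · intro j hj m
      rw [grad_sq_mul, hqz j hj]
      ring
    · intro m
      rw [grad_sq_mul, eval_linForm, hL, pderiv_linForm, eval_C, ← hcdef, hadef]
      have hc0 : c ≠ 0 := hqi
      field_simp
      ring_nf
  -- assemble the linear map and count dimensions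
  set Φ : (homogeneousSubmodule (Fin 3) ℂ 5) →ₗ[ℂ] (Fin k × Fin 3 → ℂ) :=
    LinearMap.pi (fun p => pderivEval (v p.1) p.2 ∘ₗ
      (homogeneousSubmodule (Fin 3) ℂ 5).subtype) with hΦdef
  have hΦapp : ∀ (f : homogeneousSubmodule (Fin 3) ℂ 5) (p : Fin k × Fin 3),
      Φ f p = eval (v p.1) (pderiv p.2 (f : MvPolynomial (Fin 3) ℂ)) := fun f p => rfl
  have hker : Submodule.comap (MvPolynomial.homogeneousSubmodule (Fin 3) ℂ 5).subtype
      (⨅ i : Fin k, ⨅ j : Fin 3, LinearMap.ker (pderivEval (v i) j)) = LinearMap.ker Φ := by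
    ext f
    simp only [Submodule.mem_comap, Submodule.mem_iInf, LinearMap.mem_ker]
    constructor
    · intro h
      funext p
      exact h p.1 p.2
    · intro h i j
      exact congrFun h (i, j)
  have hsurj : Function.Surjective Φ := by
    intro u
    have hblock : ∀ i : Fin k, ∃ f : homogeneousSubmodule (Fin 3) ℂ 5,
        Φ f = fun p => if p.1 = i then u (i, p.2) else 0 := by
      intro i
      obtain ⟨f, hf5, hfz, hfi⟩ := key i (fun m => u (i, m))
      refine ⟨⟨f, hf5⟩, funext fun p => ?_⟩
      rw [hΦapp]
      by_cases hp : p.1 = i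
      · rw [if_pos hp, hp]
        exact hfi p.2
      · rw [if_neg hp]
        exact hfz p.1 hp p.2
    choose F hF using hblock
    refine ⟨∑ i, F i, ?_⟩
    rw [map_sum]
    funext p
    rw [Finset.sum_apply]
    simp only [hF]
    rw [Finset.sum_ite_eq]
    simp
  have hrn := LinearMap.finrank_range_add_finrank_ker Φ
  rw [LinearMap.range_eq_top.mpr hsurj, finrank_top, Module.finrank_pi, Fintype.card_prod,
    Fintype.card_fin, Fintype.card_fin] at hrn
  have h21 : Module.finrank ℂ (homogeneousSubmodule (Fin 3) ℂ 5) = 21 := by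
    rw [finrank_homog]
    rfl
  rw [hker]
  rw [h21] at hrn
  omega
end
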